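/- arXiv:2206.14351 — 6 statements merged into one kernel-verified Lean document; each statement's English description precedes it below -/
import Mathlib

section
/- Let l ≤ k be positive integers and let π, σ, δ, ρ be permutations such that δ ⋖_l π, ρ ⋖_l σ, δ ⋖_k ρ, and π ⋖_k σ. If δ ≠ id, assume furthermore that l ≤ d₁(δ) and k ≥ d₂(δ). Then: (a) k ≥ d₂(π) and l ≤ d₁(π); and (b) l ≤ d₁(ρ) and k ≥ d₂(ρ). (Note that π ≠ id and ρ ≠ id automatically, since each covers δ, so their first and last descents are defined.) -/
/-- A permutation of the positive integers, modeled as a permutation of `ℕ`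
fixing `0` (and, separately assumed, all but finitely many points). -/
def FinPerm (w : Equiv.Perm ℕ) : Prop :=
  w 0 = 0 ∧ {i : ℕ | w i ≠ i}.Finite

/-- The length `ℓ(w)`: the number of inversions, i.e. pairs `i < j` with `w i > w j`. -/
noncomputable def len (w : Equiv.Perm ℕ) : ℕ :=
  {p : ℕ × ℕ | p.1 < p.2 ∧ w p.2 < w p.1}.ncard

/-- The set of descents: positions `i ≥ 1` with `w i > w (i+1)`. -/
def descents (w : Equiv.Perm ℕ) : Set ℕ :=
  {i : ℕ | 0 < i ∧ w (i + 1) < w i}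

/-- `d₁(w)`: the first (smallest) descent of `w`. -/
noncomputable def d1 (w : Equiv.Perm ℕ) : ℕ := sInf (descents w)

/-- `d₂(w)`: the last (largest) descent of `w`. -/
noncomputable def d2 (w : Equiv.Perm ℕ) : ℕ := sSup (descents w)

/-- `kCover k ρ π` means `ρ ⋖_k π`:  `π = ρ t_{a b}` for some positive
`a ≤ k < b`, with `ℓ(π) = ℓ(ρ) + 1`. -/
def kCover (k : ℕ) (ρ π : Equiv.Perm ℕ) : Prop :=
  ∃ a b : ℕ, 0 < a ∧ a ≤ k ∧ k < b ∧ π = ρ * Equiv.swap a b ∧ len π = len ρ + 1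

/-! A cover `δ ⋖ δ t_ab` forces `δ a < δ b` with no value of `δ` between `δ a` and `δ b` at a
position between `a` and `b`: otherwise `δ t_ab` is reached from `δ` by three length-increasing
transpositions (or, if `δ a > δ b`, lies below `δ`). Under this condition every descent of
`δ t_ab` is already a descent of `δ`, except `a` itself when `b = a + 1`; for an `m`-cover that
new descent is `m`. So the descents of `π` and `ρ` stay in `[l, k]`, which is what the bounds on
`d₁` and `d₂` say, and `π, ρ ≠ id` since their length is positive. -/

def inversions (w : Equiv.Perm ℕ) : Set (ℕ × ℕ) := {p | p.1 < p.2 ∧ w p.2 < w p.1}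

lemma len_eq_ncard_inversions (w : Equiv.Perm ℕ) : len w = (inversions w).ncard := rfl

lemma apply_eq_self_of_mem_upperBounds {w : Equiv.Perm ℕ} {N : ℕ}
    (hN : N ∈ upperBounds {i | w i ≠ i}) {m : ℕ} (hm : N < m) : w m = m := by
  by_contra h
  have := hN h
  omega

lemma finite_inversions {w : Equiv.Perm ℕ} (h : {i | w i ≠ i}.Finite) :
    (inversions w).Finite := by
  obtain ⟨N, hN⟩ := h.bddAbove
  refine ((Set.finite_Iic N).prod (Set.finite_Iic N)).subset ?_
  rintro ⟨i, j⟩ ⟨hij, hw⟩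
  simp only at hij hw
  have hj : j ≤ N := by
    by_contra hj
    have hwj := apply_eq_self_of_mem_upperBounds hN (m := j) (by omega)
    have hwi := apply_eq_self_of_mem_upperBounds hN (m := w i) (by omega)
    have := w.injective hwi
    omega
  exact ⟨show i ≤ N by omega, hj⟩

lemma finite_descents {w : Equiv.Perm ℕ} (h : {i | w i ≠ i}.Finite) : (descents w).Finite := by
  obtain ⟨N, hN⟩ := h.bddAbove
  refine (Set.finite_Iic N).subset fun i ⟨_, hi⟩ => Set.mem_Iic.2 (not_lt.1 fun hNi => ?_)
  rw [apply_eq_self_of_mem_upperBounds hN hNi,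
    apply_eq_self_of_mem_upperBounds hN (hNi.trans i.lt_succ_self)] at hi
  omega

lemma finite_moved_mul_swap {w : Equiv.Perm ℕ} (h : {i | w i ≠ i}.Finite) (a b : ℕ) :
    {i | (w * Equiv.swap a b) i ≠ i}.Finite := by
  refine (h.union (Set.toFinite {a, b})).subset fun x hx => ?_
  by_cases hx' : x = a ∨ x = b
  · exact Or.inr hx'
  · push Not at hx'
    left
    simpa [Equiv.swap_apply_of_ne_of_ne hx'.1 hx'.2] using hx

lemma len_lt_len_mul_swap {δ : Equiv.Perm ℕ} (hδ : {i | δ i ≠ i}.Finite) {a b : ℕ}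
    (hab : a < b) (hv : δ a < δ b) : len δ < len (δ * Equiv.swap a b) := by
  set π := δ * Equiv.swap a b
  set t := Equiv.swap a b
  have hI := finite_inversions hδ
  have hJ := finite_inversions (finite_moved_mul_swap hδ a b)
  set g : ℕ × ℕ → ℕ × ℕ := Prod.map t t
  -- `g` sends the inversions that are lost to inversions that are gained, and misses `(a, b)`.
  have hg : ∀ p ∈ inversions δ \ inversions π, g p ∈ inversions π \ inversions δ := by
    rintro ⟨i, j⟩ ⟨⟨hij, hδij⟩, hπij⟩
    simp only [π, g, t, inversions, Set.mem_sdiff, Set.mem_ofPred_eq, Prod.map_fst,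
      Prod.map_snd, Equiv.Perm.mul_apply, Equiv.swap_apply_self, not_and, not_lt] at hπij ⊢
    refine ⟨⟨?_, hδij⟩, fun _ => hπij hij⟩
    have := hπij hij
    rw [Equiv.swap_apply_def, Equiv.swap_apply_def] at this ⊢
    grind
  have hab_mem : (a, b) ∈ inversions π \ inversions δ := by
    simp [π, inversions]
    omega
  have hab_nmem : (a, b) ∉ g '' (inversions δ \ inversions π) := by
    rintro ⟨⟨i, j⟩, ⟨⟨hij, -⟩, -⟩, hpab⟩
    simp only [g, t, Prod.map, Prod.mk.injEq, Equiv.swap_apply_eq_iff, Equiv.swap_apply_left,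
      Equiv.swap_apply_right] at hpab
    omega
  have hcard : (inversions δ \ inversions π).ncard < (inversions π \ inversions δ).ncard := by
    calc _ < (g '' (inversions δ \ inversions π)).ncard + 1 := by
          rw [Set.ncard_image_of_injective _ (Prod.map_injective.2 ⟨t.injective, t.injective⟩)]
          omega
      _ = (insert (a, b) (g '' (inversions δ \ inversions π))).ncard :=
          (Set.ncard_insert_of_notMem hab_nmem (hI.sdiff.image g)).symm
      _ ≤ _ := Set.ncard_le_ncard (Set.insert_subset hab_mem (Set.image_subset_iff.2 hg)) hJ.sdiff
  have hδ_split := Set.ncard_inter_add_ncard_sdiff_eq_ncard (inversions δ) (inversions π) hI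
  have hπ_split := Set.ncard_inter_add_ncard_sdiff_eq_ncard (inversions π) (inversions δ) hJ
  rw [Set.inter_comm] at hπ_split
  rw [len_eq_ncard_inversions, len_eq_ncard_inversions]
  omega

lemma lt_of_len_mul_swap_eq_succ {δ : Equiv.Perm ℕ} (hδ : {i | δ i ≠ i}.Finite) {a b : ℕ}
    (hab : a < b) (hlen : len (δ * Equiv.swap a b) = len δ + 1) : δ a < δ b := by
  refine lt_of_le_of_ne (not_lt.1 fun hba => ?_) (fun h => hab.ne (δ.injective h))
  have := len_lt_len_mul_swap (finite_moved_mul_swap hδ a b) hab (by simpa using hba)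
  rw [mul_assoc, Equiv.swap_mul_self, mul_one] at this
  omega

lemma not_between_of_len_mul_swap_eq_succ {δ : Equiv.Perm ℕ} (hδ : {i | δ i ≠ i}.Finite)
    {a b c : ℕ} (hac : a < c) (hcb : c < b) (hlen : len (δ * Equiv.swap a b) = len δ + 1) :
    ¬(δ a < δ c ∧ δ c < δ b) := by
  rintro ⟨hδac, hδcb⟩
  -- `δ t_ab = δ t_ac t_cb t_ac`, and each of the three transpositions raises the length.
  have hab : a < b := hac.trans hcb
  have hswap : Equiv.swap a c * (Equiv.swap c b * Equiv.swap a c) = Equiv.swap a b := by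
    rw [← mul_assoc, Equiv.swap_comm a c, Equiv.swap_comm c b,
      Equiv.swap_mul_swap_mul_swap hcb.ne' hab.ne']
  have h₁ := len_lt_len_mul_swap hδ hac hδac
  have h₂ := len_lt_len_mul_swap (finite_moved_mul_swap hδ a c) hcb
    (by simpa [Equiv.swap_apply_of_ne_of_ne hab.ne' hcb.ne'] using hδac.trans hδcb)
  have h₃ := len_lt_len_mul_swap (finite_moved_mul_swap (finite_moved_mul_swap hδ a c) c b) hac
    (by simpa [Equiv.swap_apply_of_ne_of_ne hab.ne' hcb.ne',
      Equiv.swap_apply_of_ne_of_ne hac.ne hab.ne] using hδcb)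
  simp only [mul_assoc] at h₂ h₃
  rw [hswap] at h₃
  omega

lemma mem_descents_of_mem_descents_mul_swap {δ : Equiv.Perm ℕ} {a b i : ℕ} (hab : a < b)
    (hv : δ a < δ b) (hM : ∀ c, a < c → c < b → ¬(δ a < δ c ∧ δ c < δ b))
    (hi : i ∈ descents (δ * Equiv.swap a b)) : i ∈ descents δ ∨ (i = a ∧ b = a + 1) := by
  obtain ⟨hi0, hlt⟩ := hi
  have := hM i
  have := hM (i + 1)
  simp only [Equiv.Perm.mul_apply, Equiv.swap_apply_def] at hlt
  grind [descents, Equiv.apply_eq_iff_eq]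

lemma descents_subset_Icc_of_kCover {δ π : Equiv.Perm ℕ} (hδ : {i | δ i ≠ i}.Finite)
    {l m k : ℕ} (hlm : l ≤ m) (hmk : m ≤ k) (hcov : kCover m δ π)
    (hδd : descents δ ⊆ Set.Icc l k) : descents π ⊆ Set.Icc l k := by
  obtain ⟨a, b, -, ham, hmb, rfl, hlen⟩ := hcov
  have hab : a < b := by omega
  intro i hi
  rcases mem_descents_of_mem_descents_mul_swap hab (lt_of_len_mul_swap_eq_succ hδ hab hlen)
    (fun c hac hcb => not_between_of_len_mul_swap_eq_succ hδ hac hcb hlen) hi with h | ⟨rfl, rfl⟩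
  · exact hδd h
  · exact ⟨by omega, by omega⟩

lemma descents_one : descents 1 = ∅ :=
  Set.eq_empty_of_forall_notMem fun i ⟨_, hi⟩ => by simp at hi

lemma len_one : len 1 = 0 := by
  rw [len_eq_ncard_inversions,
    Set.eq_empty_of_forall_notMem fun p (hp : p ∈ inversions 1) => lt_asymm hp.1 hp.2,
    Set.ncard_empty]

lemma eq_one_of_descents_eq_empty {w : Equiv.Perm ℕ} (h0 : w 0 = 0) (h : descents w = ∅) :
    w = 1 := by
  have hmono : StrictMono w := strictMono_nat_of_lt_succ fun n => by
    have hn : n ∉ descents w := h ▸ Set.notMem_empty n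
    have hne : w n ≠ w (n + 1) := fun h' => by simpa using w.injective h'
    rcases n.eq_zero_or_pos with rfl | hpos
    · omega
    · simp only [descents, Set.mem_ofPred_eq, not_and, not_lt] at hn
      exact lt_of_le_of_ne (hn hpos) hne
  ext n
  exact congrArg (· n) (Subsingleton.elim (StrictMono.orderIsoOfSurjective w hmono w.surjective)
    (OrderIso.refl ℕ))

lemma descents_nonempty_of_ne_one {w : Equiv.Perm ℕ} (h0 : w 0 = 0) (hw : w ≠ 1) :
    (descents w).Nonempty :=
  Set.nonempty_iff_ne_empty.2 fun h => hw (eq_one_of_descents_eq_empty h0 h)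

lemma ne_one_of_kCover {m : ℕ} {δ π : Equiv.Perm ℕ} (h : kCover m δ π) : π ≠ 1 := by
  rintro rfl
  obtain ⟨-, -, -, -, -, -, hlen⟩ := h
  rw [len_one] at hlen
  omega

lemma descents_subset_Icc_iff {w : Equiv.Perm ℕ} (hne : (descents w).Nonempty)
    (hfin : (descents w).Finite) {l k : ℕ} :
    descents w ⊆ Set.Icc l k ↔ l ≤ d1 w ∧ d2 w ≤ k :=
  ⟨fun h => ⟨(h (Nat.sInf_mem hne)).1, (h (hne.csSup_mem hfin)).2⟩,
    fun ⟨h1, h2⟩ _ hi => ⟨h1.trans (Nat.sInf_le hi), (le_csSup hfin.bddAbove hi).trans h2⟩⟩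

lemma le_d1_and_d2_le_of_kCover {δ π : Equiv.Perm ℕ} (hδ : FinPerm δ) (hπ : FinPerm π)
    {l m k : ℕ} (hlm : l ≤ m) (hmk : m ≤ k) (hcov : kCover m δ π)
    (hδd : descents δ ⊆ Set.Icc l k) : l ≤ d1 π ∧ d2 π ≤ k :=
  (descents_subset_Icc_iff (descents_nonempty_of_ne_one hπ.1 (ne_one_of_kCover hcov))
    (finite_descents hπ.2)).1 (descents_subset_Icc_of_kCover hδ.2 hlm hmk hcov hδd)

theorem stmt0_general (l k : ℕ) (hlk : l ≤ k)
    (π δ ρ : Equiv.Perm ℕ)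
    (hπ : FinPerm π) (hδ : FinPerm δ) (hρ : FinPerm ρ)
    (h1 : kCover l δ π)
    (h3 : kCover k δ ρ)
    (hdesc : δ ≠ 1 → l ≤ d1 δ ∧ d2 δ ≤ k) :
    (d2 π ≤ k ∧ l ≤ d1 π) ∧ (l ≤ d1 ρ ∧ d2 ρ ≤ k) := by
  have hδd : descents δ ⊆ Set.Icc l k := by
    rcases (descents δ).eq_empty_or_nonempty with hempty | hne
    · simp [hempty]
    · refine (descents_subset_Icc_iff hne (finite_descents hδ.2)).2 (hdesc ?_)
      rintro rfl
      simp [descents_one] at hne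
  obtain ⟨hπ1, hπ2⟩ := le_d1_and_d2_le_of_kCover hδ hπ le_rfl hlk h1 hδd
  exact ⟨⟨hπ2, hπ1⟩, le_d1_and_d2_le_of_kCover hδ hρ hlk le_rfl h3 hδd⟩

/-- Lemma on a single square of a growth diagram (Lemma 4.1). -/
theorem stmt0 (l k : ℕ) (hl : 0 < l) (hlk : l ≤ k)
    (π σ δ ρ : Equiv.Perm ℕ)
    (hπ : FinPerm π) (hσ : FinPerm σ) (hδ : FinPerm δ) (hρ : FinPerm ρ)
    (h1 : kCover l δ π) (h2 : kCover l ρ σ)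
    (h3 : kCover k δ ρ) (h4 : kCover k π σ)
    (hdesc : δ ≠ 1 → l ≤ d1 δ ∧ d2 δ ≤ k) :
    (d2 π ≤ k ∧ l ≤ d1 π) ∧ (l ≤ d1 ρ ∧ d2 ρ ≤ k) :=
  stmt0_general l k hlk π δ ρ hπ hδ hρ h1 h3 hdesc
end

section
/- Let δ ≠ id be a permutation and let l be a positive integer with l ≤ d₁(δ). Suppose π = δ t_{ab} for some a ≤ l < b with ℓ(π) = ℓ(δ) + 1. Then d₂(π) ≤ d₂(δ). -/
lemma invSet_finite (w : Equiv.Perm ℕ) (h : {i : ℕ | w i ≠ i}.Finite) :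
    {p : ℕ × ℕ | p.1 < p.2 ∧ w p.2 < w p.1}.Finite := by
  obtain ⟨N, hN⟩ := h.bddAbove
  have hfix : ∀ i, N < i → w i = i := by
    intro i hi
    by_contra hc
    exact absurd (hN (show i ∈ {i : ℕ | w i ≠ i} from hc)) (by omega)
  set M := (Finset.image w (Finset.range (N + 1))).sup id + N + 1 with hM
  have hsub : {p : ℕ × ℕ | p.1 < p.2 ∧ w p.2 < w p.1} ⊆ Set.Iic M ×ˢ Set.Iic M := by
    rintro ⟨i, j⟩ ⟨hij, hw⟩
    dsimp only at hij hw
    have hj : j ≤ M := by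
      by_cases hjN : j ≤ N
      · omega
      · have hwj : w j = j := hfix j (by omega)
        have hiN : i ≤ N := by
          by_contra hc
          have : w i = i := hfix i (by omega)
          omega
        have : w i ≤ (Finset.image w (Finset.range (N + 1))).sup id := by
          apply Finset.le_sup (f := id)
          exact Finset.mem_image.2 ⟨i, Finset.mem_range.2 (by omega), rfl⟩
        omega
    exact ⟨by simp; omega, by simp; omega⟩
  exact ((Set.finite_Iic M).prod (Set.finite_Iic M)).subset hsub

lemma key (w : Equiv.Perm ℕ) (a b : ℕ) (hab : a < b) (hw : w a < w b)
    (h1 : {p : ℕ × ℕ | p.1 < p.2 ∧ w p.2 < w p.1}.Finite)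
    (h2 : {p : ℕ × ℕ | p.1 < p.2 ∧ (w * Equiv.swap a b) p.2 < (w * Equiv.swap a b) p.1}.Finite) :
    len w + 1 ≤ len (w * Equiv.swap a b) ∧
      ∀ c, a < c → c < b → w a < w c → w c < w b →
        len w + 2 ≤ len (w * Equiv.swap a b) := by
  set u := w * Equiv.swap a b with hu
  have hua : u a = w b := by simp [hu, Equiv.Perm.mul_apply]
  have hub : u b = w a := by simp [hu, Equiv.Perm.mul_apply]
  have hux : ∀ x, x ≠ a → x ≠ b → u x = w x := by
    intro x hxa hxb
    simp [hu, Equiv.Perm.mul_apply, Equiv.swap_apply_of_ne_of_ne hxa hxb]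
  have huswap : ∀ x, u (Equiv.swap a b x) = w x := by
    intro x; simp [hu, Equiv.Perm.mul_apply]
  have hswx : ∀ x, x ≠ a → x ≠ b → Equiv.swap a b x = x := fun x h h' =>
    Equiv.swap_apply_of_ne_of_ne h h'
  have hswa : Equiv.swap a b a = b := Equiv.swap_apply_left a b
  have hswb : Equiv.swap a b b = a := Equiv.swap_apply_right a b
  set S : Set (ℕ × ℕ) := {p : ℕ × ℕ | p.1 < p.2 ∧ w p.2 < w p.1} with hS
  set U : Set (ℕ × ℕ) := {p : ℕ × ℕ | p.1 < p.2 ∧ u p.2 < u p.1} with hU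
  set F : ℕ × ℕ → ℕ × ℕ := fun p =>
    if (p.1 = a ∧ p.2 < b) ∨ (a < p.1 ∧ p.2 = b) then p
    else (Equiv.swap a b p.1, Equiv.swap a b p.2) with hF
  have hUmem : ∀ x y : ℕ, (x, y) ∈ U ↔ x < y ∧ u y < u x := by
    intro x y; rw [hU]; simp
  have hSmem : ∀ x y : ℕ, (x, y) ∈ S ↔ x < y ∧ w y < w x := by
    intro x y; rw [hS]; simp
  -- mapsTo
  have hmaps : ∀ p ∈ S, F p ∈ U := by
    rintro ⟨i, j⟩ hp
    obtain ⟨hij, hwp⟩ := (hSmem i j).1 hp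
    by_cases hC : (i = a ∧ j < b) ∨ (a < i ∧ j = b)
    · simp only [hF, if_pos hC]
      rcases hC with ⟨hia, hjb⟩ | ⟨hai, hjb⟩
      · rw [hUmem]
        refine ⟨hij, ?_⟩
        rw [hia] at hij ⊢
        rw [hua, hux j (by omega) (by omega)]
        rw [hia] at hwp
        omega
      · rw [hUmem]
        refine ⟨hij, ?_⟩
        rw [hjb] at hij hwp ⊢
        rw [hub, hux i (by omega) (by omega)]
        omega
    · simp only [hF, if_neg hC]
      push_neg at hC
      rw [hUmem]
      refine ⟨?_, by rw [huswap, huswap]; exact hwp⟩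
      by_cases hia : i = a
      · have hbj : b ≤ j := hC.1 hia
        have hjb : j ≠ b := by
          intro e
          rw [hia, e] at hwp
          omega
        rw [hia, hswa, hswx j (by omega) hjb]
        omega
      · by_cases hib : i = b
        · have hja : j ≠ a := by omega
          have hjb : j ≠ b := by omega
          rw [hib, hswb, hswx j hja hjb]
          omega
        · rw [hswx i hia hib]
          by_cases hja : j = a
          · rw [hja, hswa]; omega
          · by_cases hjb : j = b
            · have hi : ¬ a < i := fun h => (hC.2 h) hjb
              rw [hjb, hswb]; omega
            · rw [hswx j hja hjb]; exact hij
  -- injectivity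
  have hswinj : Function.Injective (Equiv.swap a b) := (Equiv.swap a b).injective
  have hinjF : Set.InjOn F S := by
    rintro ⟨i, j⟩ hp ⟨k, m⟩ hq heq
    obtain ⟨hij, hwp⟩ := (hSmem i j).1 hp
    obtain ⟨hkm, hwq⟩ := (hSmem k m).1 hq
    by_cases hCp : (i = a ∧ j < b) ∨ (a < i ∧ j = b) <;>
      by_cases hCq : (k = a ∧ m < b) ∨ (a < k ∧ m = b)
    · simp only [hF, if_pos hCp, if_pos hCq] at heq
      exact heq
    · simp only [hF, if_pos hCp, if_neg hCq, Prod.mk.injEq] at heq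
      obtain ⟨e1, e2⟩ := heq
      exfalso
      rcases hCp with ⟨hia, hjb⟩ | ⟨hai, hjb⟩
      · have h1' : Equiv.swap a b k = a := by rw [← e1, hia]
        have hk : k = b := by
          have h2' := congrArg (Equiv.swap a b) h1'
          rwa [Equiv.swap_apply_self, hswa] at h2'
        have hm : Equiv.swap a b m = m := hswx m (by omega) (by omega)
        rw [hm] at e2
        omega
      · have h1' : Equiv.swap a b m = b := by rw [← e2, hjb]
        have hm : m = a := by
          have h2' := congrArg (Equiv.swap a b) h1'
          rwa [Equiv.swap_apply_self, hswb] at h2'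
        have hk : Equiv.swap a b k = k := hswx k (by omega) (by omega)
        rw [hk] at e1
        omega
    · simp only [hF, if_neg hCp, if_pos hCq, Prod.mk.injEq] at heq
      obtain ⟨e1, e2⟩ := heq
      exfalso
      rcases hCq with ⟨hka, hmb⟩ | ⟨hak, hmb⟩
      · have h1' : Equiv.swap a b i = a := by rw [e1, hka]
        have hi : i = b := by
          have h2' := congrArg (Equiv.swap a b) h1'
          rwa [Equiv.swap_apply_self, hswa] at h2'
        have hj : Equiv.swap a b j = j := hswx j (by omega) (by omega)
        rw [hj] at e2
        omega
      · have h1' : Equiv.swap a b j = b := by rw [e2, hmb]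
        have hj : j = a := by
          have h2' := congrArg (Equiv.swap a b) h1'
          rwa [Equiv.swap_apply_self, hswb] at h2'
        have hi : Equiv.swap a b i = i := hswx i (by omega) (by omega)
        rw [hi] at e1
        omega
    · simp only [hF, if_neg hCp, if_neg hCq, Prod.mk.injEq] at heq
      obtain ⟨e1, e2⟩ := heq
      exact Prod.ext (hswinj e1) (hswinj e2)
  -- non-membership of (a, j)
  have himg : ∀ j, a < j → j ≤ b → ¬ w j < w a → (a, j) ∉ F '' S := by
    rintro j haj hjb hwj ⟨⟨i, m⟩, hp, heq⟩
    obtain ⟨him, hwim⟩ := (hSmem i m).1 hp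
    by_cases hC : (i = a ∧ m < b) ∨ (a < i ∧ m = b)
    · simp only [hF, if_pos hC, Prod.mk.injEq] at heq
      obtain ⟨e1, e2⟩ := heq
      rw [e1, e2] at hwim
      exact hwj hwim
    · simp only [hF, if_neg hC, Prod.mk.injEq] at heq
      obtain ⟨e1, e2⟩ := heq
      have hi : i = b := by
        have := congrArg (Equiv.swap a b) e1
        rwa [Equiv.swap_apply_self, hswa] at this
      have : Equiv.swap a b m = m := hswx m (by omega) (by omega)
      omega
  have himgsub : F '' S ⊆ U := by
    rintro x ⟨p, hp, rfl⟩; exact hmaps p hp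
  have himgfin : (F '' S).Finite := h1.image F
  have hcardimg : (F '' S).ncard = S.ncard := Set.ncard_image_of_injOn hinjF
  have habU : (a, b) ∈ U := (hUmem a b).2 ⟨hab, by rw [hua, hub]; exact hw⟩
  have habnot : (a, b) ∉ F '' S := himg b hab le_rfl (by omega)
  constructor
  · have hsub1 : insert (a, b) (F '' S) ⊆ U := Set.insert_subset habU himgsub
    calc len w + 1 = (F '' S).ncard + 1 := by rw [hcardimg]; rfl
      _ = (insert (a, b) (F '' S)).ncard := (Set.ncard_insert_of_notMem habnot himgfin).symm
      _ ≤ U.ncard := Set.ncard_le_ncard hsub1 h2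
      _ = len u := rfl
  · intro c hac hcb hwac hwcb
    have hcU : (a, c) ∈ U :=
      (hUmem a c).2 ⟨hac, by rw [hua, hux c (by omega) (by omega)]; exact hwcb⟩
    have hcnot : (a, c) ∉ F '' S := himg c hac hcb.le (by omega)
    have hsub2 : insert (a, b) (insert (a, c) (F '' S)) ⊆ U :=
      Set.insert_subset habU (Set.insert_subset hcU himgsub)
    have habnot2 : (a, b) ∉ insert (a, c) (F '' S) := by
      simp only [Set.mem_insert_iff]
      push_neg
      exact ⟨by simp; omega, habnot⟩
    calc len w + 2 = (F '' S).ncard + 1 + 1 := by rw [hcardimg]; rfl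
      _ = (insert (a, c) (F '' S)).ncard + 1 := by
          rw [Set.ncard_insert_of_notMem hcnot himgfin]
      _ = (insert (a, b) (insert (a, c) (F '' S))).ncard := by
          rw [Set.ncard_insert_of_notMem habnot2 (himgfin.insert _)]
      _ ≤ U.ncard := Set.ncard_le_ncard hsub2 h2
      _ = len u := rfl

lemma descents_nonempty (δ : Equiv.Perm ℕ) (hδ : FinPerm δ) (hne : δ ≠ 1) :
    (descents δ).Nonempty := by
  by_contra h
  rw [Set.not_nonempty_iff_eq_empty, Set.eq_empty_iff_forall_notMem] at h
  have hnod : ∀ i, 0 < i → δ i < δ (i + 1) := by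
    intro i hi
    have h1 : ¬ (0 < i ∧ δ (i + 1) < δ i) := h i
    have h2 : δ i ≠ δ (i + 1) := fun e => by
      have := δ.injective e; omega
    omega
  have hge : ∀ i, 0 < i → i ≤ δ i := by
    intro i hi
    induction i with
    | zero => omega
    | succ n ih =>
      rcases Nat.eq_zero_or_pos n with rfl | hn
      · have h0 : δ (0 + 1) ≠ 0 := by
          intro e
          have h1 : δ (0 + 1) = δ 0 := by rw [e, hδ.1]
          have := δ.injective h1
          omega
        omega
      · have := ih hn
        have := hnod n hn
        omega
  obtain ⟨i, hi⟩ : ∃ i, δ i ≠ i := by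
    by_contra hc
    push_neg at hc
    exact hne (Equiv.ext hc)
  have hi0 : 0 < i := by
    rcases Nat.eq_zero_or_pos i with rfl | h'
    · exact absurd hδ.1 hi
    · exact h'
  have hgrow : ∀ j, i ≤ j → j < δ j := by
    intro j hj
    induction j with
    | zero => omega
    | succ n ih =>
      rcases Nat.lt_or_ge n i with h' | h'
      · have : i = n + 1 := by omega
        rw [← this]
        exact lt_of_le_of_ne (hge i hi0) (Ne.symm hi)
      · have := ih h'
        have := hnod n (by omega)
        omega
  obtain ⟨N, hN⟩ := hδ.2.bddAbove
  have hfix : δ (max i (N + 1)) = max i (N + 1) := by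
    by_contra hc
    have h1 := hN (show max i (N + 1) ∈ {i : ℕ | δ i ≠ i} from hc)
    have h2 := le_max_right i (N + 1)
    omega
  have := hgrow (max i (N + 1)) (le_max_left _ _)
  omega

lemma descents_bddAbove (δ : Equiv.Perm ℕ) (hδ : FinPerm δ) :
    BddAbove (descents δ) := by
  obtain ⟨N, hN⟩ := hδ.2.bddAbove
  refine ⟨N, fun i hi => ?_⟩
  obtain ⟨hi0, hdesc⟩ := hi
  by_contra hc
  have h1 : δ i = i := by
    by_contra hc'
    exact absurd (hN (show i ∈ {i : ℕ | δ i ≠ i} from hc')) (by omega)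
  have h2 : δ (i + 1) = i + 1 := by
    by_contra hc'
    exact absurd (hN (show i + 1 ∈ {i : ℕ | δ i ≠ i} from hc')) (by omega)
  rw [h1, h2] at hdesc
  omega

theorem stmt1 (δ : Equiv.Perm ℕ) (hδ : FinPerm δ) (hne : δ ≠ 1)
    (l : ℕ) (hl : 0 < l) (hld : l ≤ d1 δ)
    (π : Equiv.Perm ℕ) (a b : ℕ) (ha : 0 < a) (hal : a ≤ l) (hlb : l < b)
    (hπ : π = δ * Equiv.swap a b) (hlen : len π = len δ + 1) :
    d2 π ≤ d2 δ := by
  have hab : a < b := by omega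
  have hπa : π a = δ b := by rw [hπ]; simp [Equiv.Perm.mul_apply]
  have hπb : π b = δ a := by rw [hπ]; simp [Equiv.Perm.mul_apply]
  have hπx : ∀ x, x ≠ a → x ≠ b → π x = δ x := by
    intro x hxa hxb
    rw [hπ]
    simp [Equiv.Perm.mul_apply, Equiv.swap_apply_of_ne_of_ne hxa hxb]
  have hDne : (descents δ).Nonempty := descents_nonempty δ hδ hne
  have hDbdd : BddAbove (descents δ) := descents_bddAbove δ hδ
  have hd12 : d1 δ ≤ d2 δ := le_csSup hDbdd (Nat.sInf_mem hDne)
  have finδ := invSet_finite δ hδ.2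
  have hsuppπ : {i : ℕ | π i ≠ i}.Finite := by
    have hAB : ({a, b} : Set ℕ).Finite := (Set.finite_singleton b).insert a
    apply (hδ.2.union hAB).subset
    intro x hx
    by_cases hxa : x = a
    · exact Or.inr (by simp [hxa])
    · by_cases hxb : x = b
      · exact Or.inr (by simp [hxb])
      · exact Or.inl (by rw [Set.mem_setOf_eq, ← hπx x hxa hxb]; exact hx)
  have finπ := invSet_finite π hsuppπ
  have finπ' : {p : ℕ × ℕ | p.1 < p.2 ∧ (δ * Equiv.swap a b) p.2 < (δ * Equiv.swap a b) p.1}.Finite := by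
    rw [← hπ]; exact finπ
  -- δ a < δ b
  have hwab : δ a < δ b := by
    rcases lt_trichotomy (δ a) (δ b) with h | h | h
    · exact h
    · exact absurd (δ.injective h) (by omega)
    · exfalso
      have hπab : π a < π b := by rw [hπa, hπb]; exact h
      have hswap : π * Equiv.swap a b = δ := by
        rw [hπ, mul_assoc, Equiv.swap_mul_self, mul_one]
      have finδ' : {p : ℕ × ℕ | p.1 < p.2 ∧ (π * Equiv.swap a b) p.2 < (π * Equiv.swap a b) p.1}.Finite := by
        rw [hswap]; exact finδ
      have := (key π a b hab hπab finπ finδ').1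
      rw [hswap] at this
      omega
  have hkey := key δ a b hab hwab finδ finπ'
  have hmid : ∀ c, a < c → c < b → δ a < δ c → ¬ δ c < δ b := by
    intro c h1 h2 h3 h4
    have := hkey.2 c h1 h2 h3 h4
    rw [← hπ] at this
    omega
  -- every descent of π is ≤ d2 δ
  have hbound : ∀ i ∈ descents π, i ≤ d2 δ := by
    rintro i ⟨hi0, hidesc⟩
    by_cases hia : i ≤ a
    · calc i ≤ a := hia
        _ ≤ d1 δ := by omega
        _ ≤ d2 δ := hd12
    · push_neg at hia
      by_cases hib : i + 1 = b
      · -- i = b - 1, a < i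
        have hπi : π i = δ i := hπx i (by omega) (by omega)
        have hπi1 : π (i + 1) = δ a := by rw [hib, hπb]
        rw [hπi, hπi1] at hidesc
        have hdi : δ b < δ i := by
          rcases lt_trichotomy (δ i) (δ b) with h | h | h
          · exact absurd h (hmid i hia (by omega) hidesc)
          · exact absurd (δ.injective h) (by omega)
          · exact h
        have : i ∈ descents δ := ⟨hi0, by rw [hib]; exact hdi⟩
        exact le_csSup hDbdd this
      · by_cases hib' : i = b
        · subst hib'
          rw [hπb, hπx (i + 1) (by omega) (by omega)] at hidesc
          have : i ∈ descents δ := ⟨hi0, by omega⟩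
          exact le_csSup hDbdd this
        · have hπi : π i = δ i := hπx i (by omega) (by omega)
          have hπi1 : π (i + 1) = δ (i + 1) := hπx (i + 1) (by omega) (by omega)
          rw [hπi, hπi1] at hidesc
          exact le_csSup hDbdd ⟨hi0, hidesc⟩
  exact csSup_le' hbound
end

section
/- Let δ ≠ id be a permutation and let l be a positive integer with l ≤ d₁(δ). Suppose π = δ t_{ab} with ℓ(π) = ℓ(δ) + 1, where a < l < b (strict inequality a < l). Then d₁(π) = d₁(δ). -/
namespace Stmt3Aux

def Inv (w : Equiv.Perm ℕ) : Set (ℕ × ℕ) := {p | p.1 < p.2 ∧ w p.2 < w p.1}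

lemma len_def (w : Equiv.Perm ℕ) : len w = (Inv w).ncard := rfl

lemma inv_finite (w : Equiv.Perm ℕ) (h : {i | w i ≠ i}.Finite) : (Inv w).Finite := by
  classical
  set S := h.toFinset with hS
  set N := (S ∪ S.image w).sup id with hN
  have hmem : ∀ x ∈ S ∪ S.image w, x ≤ N := fun x hx => Finset.le_sup (f := id) hx
  apply Set.Finite.subset ((Set.finite_Iic N).prod (Set.finite_Iic N))
  rintro ⟨i, j⟩ ⟨hij, hw⟩
  dsimp only at hij hw
  have hj : j ≤ N := by
    by_contra hj
    push_neg at hj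
    have hjS : j ∉ S := by
      intro hjS; exact absurd (hmem j (Finset.mem_union_left _ hjS)) (by omega)
    have hwj : w j = j := by
      by_contra hc
      exact hjS (by simp [hS, Set.Finite.mem_toFinset, hc])
    by_cases hiS : i ∈ S
    · have : w i ≤ N := hmem _ (Finset.mem_union_right _ (Finset.mem_image_of_mem w hiS))
      omega
    · have hwi : w i = i := by
        by_contra hc
        exact hiS (by simp [hS, Set.Finite.mem_toFinset, hc])
      omega
  exact ⟨by simpa using (by omega : i ≤ N), by simpa using hj⟩

def g (a b : ℕ) (p : ℕ × ℕ) : ℕ × ℕ :=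
  if p.1 < a ∧ (p.2 = a ∨ p.2 = b) then (p.1, if p.2 = a then b else a)
  else if (p.1 = a ∨ p.1 = b) ∧ b < p.2 then ((if p.1 = a then b else a), p.2)
  else p

section gv
variable {a b i j : ℕ}

lemma gv1 (hia : i < a) (hja : j = a) : g a b (i, j) = (i, b) := by
  simp only [g]; rw [if_pos ⟨hia, Or.inl hja⟩, if_pos hja]

lemma gv2 (hab : a < b) (hia : i < a) (hjb : j = b) : g a b (i, j) = (i, a) := by
  simp only [g]; rw [if_pos ⟨hia, Or.inr hjb⟩, if_neg (by omega)]

lemma gv3 (hia : i = a) (hbj : b < j) : g a b (i, j) = (b, j) := by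
  simp only [g]; rw [if_neg (by omega), if_pos ⟨Or.inl hia, hbj⟩, if_pos hia]

lemma gv4 (hab : a < b) (hib : i = b) (hbj : b < j) : g a b (i, j) = (a, j) := by
  simp only [g]; rw [if_neg (by omega), if_pos ⟨Or.inr hib, hbj⟩, if_neg (by omega)]

lemma gv5 (h1 : ¬(i < a ∧ (j = a ∨ j = b))) (h2 : ¬((i = a ∨ i = b) ∧ b < j)) :
    g a b (i, j) = (i, j) := by
  simp only [g]; rw [if_neg h1, if_neg h2]

end gv

lemma g_invol (a b : ℕ) (hab : a < b) : Function.Involutive (g a b) := by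
  rintro ⟨i, j⟩
  by_cases h1 : i < a ∧ (j = a ∨ j = b)
  · obtain ⟨hia, hj⟩ := h1
    rcases hj with hja | hjb
    · rw [gv1 hia hja, gv2 hab hia rfl, hja]
    · rw [gv2 hab hia hjb, gv1 hia rfl, hjb]
  · by_cases h2 : (i = a ∨ i = b) ∧ b < j
    · obtain ⟨hi, hbj⟩ := h2
      rcases hi with hia | hib
      · rw [gv3 hia hbj, gv4 hab rfl hbj, hia]
      · rw [gv4 hab hib hbj, gv3 rfl hbj, hib]
    · rw [gv5 h1 h2, gv5 h1 h2]

lemma g_mem (w : Equiv.Perm ℕ) (a b : ℕ) (hab : a < b) (hw : w a < w b)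
    (p : ℕ × ℕ) (hp : p ∈ Inv w) : g a b p ∈ Inv (w * Equiv.swap a b) := by
  classical
  obtain ⟨i, j⟩ := p
  obtain ⟨hij, hinv⟩ := hp
  dsimp only at hij hinv
  have hπa : (w * Equiv.swap a b) a = w b := by simp
  have hπb : (w * Equiv.swap a b) b = w a := by simp
  have hπo : ∀ x, x ≠ a → x ≠ b → (w * Equiv.swap a b) x = w x := by
    intro x h1 h2
    simp [Equiv.Perm.mul_apply, Equiv.swap_apply_of_ne_of_ne h1 h2]
  by_cases h1 : i < a ∧ (j = a ∨ j = b)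
  · obtain ⟨hia, hj⟩ := h1
    rcases hj with hja | hjb
    · rw [gv1 hia hja]
      refine ⟨by omega, ?_⟩
      rw [hπb, hπo i (by omega) (by omega)]
      rw [hja] at hinv; exact hinv
    · rw [gv2 hab hia hjb]
      refine ⟨by omega, ?_⟩
      rw [hπa, hπo i (by omega) (by omega)]
      rw [hjb] at hinv; exact hinv
  · by_cases h2 : (i = a ∨ i = b) ∧ b < j
    · obtain ⟨hi, hbj⟩ := h2
      rcases hi with hia | hib
      · rw [gv3 hia hbj]
        refine ⟨hbj, ?_⟩
        rw [hπb, hπo j (by omega) (by omega)]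
        rw [hia] at hinv; exact hinv
      · rw [gv4 hab hib hbj]
        refine ⟨by omega, ?_⟩
        rw [hπa, hπo j (by omega) (by omega)]
        rw [hib] at hinv; exact hinv
    · rw [gv5 h1 h2]
      refine ⟨hij, ?_⟩
      by_cases hja : j = a
      · exact absurd ⟨by omega, Or.inl hja⟩ h1
      by_cases hjb : j = b
      · by_cases hia : i = a
        · rw [hia, hjb] at hinv; omega
        · have hai : ¬ i < a := fun hc => h1 ⟨hc, Or.inr hjb⟩
          have e1 : (w * Equiv.swap a b) j = w a := by rw [hjb]; exact hπb
          have e2 : (w * Equiv.swap a b) i = w i := hπo i hia (by omega)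
          rw [hjb] at hinv
          rw [e1, e2]; omega
      · by_cases hia : i = a
        · have hjb' : j < b := by
            have := fun hc => h2 ⟨Or.inl hia, hc⟩
            omega
          have e1 : (w * Equiv.swap a b) i = w b := by rw [hia]; exact hπa
          have e2 : (w * Equiv.swap a b) j = w j := hπo j hja hjb
          rw [hia] at hinv
          rw [e1, e2]; omega
        · by_cases hib : i = b
          · exact absurd ⟨Or.inr hib, by omega⟩ h2
          · rw [hπo i hia hib, hπo j hja hjb]
            exact hinv

lemma g_fix_ab (a b : ℕ) (hab : a < b) : g a b (a, b) = (a, b) := by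
  simp only [g]
  rw [if_neg (by omega), if_neg (by omega)]

lemma g_fix_ac (a b c : ℕ) (hac : a < c) (hcb : c < b) : g a b (a, c) = (a, c) := by
  simp only [g]
  rw [if_neg (by omega), if_neg (by omega)]

lemma key1 (w : Equiv.Perm ℕ) (a b : ℕ) (hab : a < b) (hw : w a < w b)
    (hfw : (Inv w).Finite) (hfp : (Inv (w * Equiv.swap a b)).Finite) :
    len w + 1 ≤ len (w * Equiv.swap a b) := by
  have hinj := (g_invol a b hab).injective
  have himg : (g a b '' Inv w).Finite := hfw.image _
  have hnm : ((a, b) : ℕ × ℕ) ∉ g a b '' Inv w := by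
    rintro ⟨p, hp, hgp⟩
    have : p = (a, b) := by
      have := congrArg (g a b) hgp
      rwa [g_invol a b hab p, g_fix_ab a b hab] at this
    rw [this] at hp
    obtain ⟨-, h2⟩ := hp
    dsimp only at h2
    omega
  have hsub : insert ((a, b) : ℕ × ℕ) (g a b '' Inv w) ⊆ Inv (w * Equiv.swap a b) := by
    rintro p (rfl | ⟨q, hq, rfl⟩)
    · refine ⟨hab, ?_⟩
      simp
      omega
    · exact g_mem w a b hab hw q hq
  calc len w + 1 = (g a b '' Inv w).ncard + 1 := by
        rw [Set.ncard_image_of_injective _ hinj, len_def]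
    _ = (insert ((a, b) : ℕ × ℕ) (g a b '' Inv w)).ncard := by
        rw [Set.ncard_insert_of_notMem hnm himg]
    _ ≤ len (w * Equiv.swap a b) := by
        rw [len_def]; exact Set.ncard_le_ncard hsub hfp

lemma key2 (w : Equiv.Perm ℕ) (a b c : ℕ) (hab : a < b) (hw : w a < w b)
    (hac : a < c) (hcb : c < b) (hc1 : w a < w c) (hc2 : w c < w b)
    (hfw : (Inv w).Finite) (hfp : (Inv (w * Equiv.swap a b)).Finite) :
    len w + 2 ≤ len (w * Equiv.swap a b) := by
  have hinj := (g_invol a b hab).injective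
  have himg : (g a b '' Inv w).Finite := hfw.image _
  have hnm1 : ((a, c) : ℕ × ℕ) ∉ g a b '' Inv w := by
    rintro ⟨p, hp, hgp⟩
    have : p = (a, c) := by
      have := congrArg (g a b) hgp
      rwa [g_invol a b hab p, g_fix_ac a b c hac hcb] at this
    rw [this] at hp
    obtain ⟨-, h2⟩ := hp
    dsimp only at h2
    omega
  have hnm2 : ((a, b) : ℕ × ℕ) ∉ insert ((a, c) : ℕ × ℕ) (g a b '' Inv w) := by
    rintro (h | ⟨p, hp, hgp⟩)
    · exact absurd (congrArg Prod.snd h) (by simp; omega)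
    · have : p = (a, b) := by
        have := congrArg (g a b) hgp
        rwa [g_invol a b hab p, g_fix_ab a b hab] at this
      rw [this] at hp
      obtain ⟨-, h2⟩ := hp
      dsimp only at h2
      omega
  have hsub : insert ((a, b) : ℕ × ℕ) (insert ((a, c) : ℕ × ℕ) (g a b '' Inv w))
      ⊆ Inv (w * Equiv.swap a b) := by
    rintro p (rfl | rfl | ⟨q, hq, rfl⟩)
    · refine ⟨hab, ?_⟩
      simp; omega
    · refine ⟨hac, ?_⟩
      have e1 : (w * Equiv.swap a b) a = w b := by simp
      have e2 : (w * Equiv.swap a b) c = w c := by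
        simp [Equiv.Perm.mul_apply, Equiv.swap_apply_of_ne_of_ne (by omega : c ≠ a) (by omega : c ≠ b)]
      rw [e1, e2]; omega
    · exact g_mem w a b hab hw q hq
  calc len w + 2 = (insert ((a, c) : ℕ × ℕ) (g a b '' Inv w)).ncard + 1 := by
        rw [Set.ncard_insert_of_notMem hnm1 himg,
          Set.ncard_image_of_injective _ hinj, len_def]
    _ = (insert ((a, b) : ℕ × ℕ) (insert ((a, c) : ℕ × ℕ) (g a b '' Inv w))).ncard := by
        rw [Set.ncard_insert_of_notMem hnm2 (himg.insert _)]
    _ ≤ len (w * Equiv.swap a b) := by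
        rw [len_def]; exact Set.ncard_le_ncard hsub hfp

lemma descents_nonempty (w : Equiv.Perm ℕ) (hw : FinPerm w) (hne : w ≠ 1) :
    (descents w).Nonempty := by
  by_contra h
  rw [Set.not_nonempty_iff_eq_empty] at h
  have hmono : ∀ i, 0 < i → w i < w (i + 1) := by
    intro i hi
    have hnd : i ∉ descents w := by rw [h]; exact Set.notMem_empty i
    have h1 : ¬ w (i + 1) < w i := fun hc => hnd ⟨hi, hc⟩
    have h2 : w i ≠ w (i + 1) := w.injective.ne (by omega)
    omega
  have hge : ∀ i, i ≤ w i := by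
    intro i
    induction i with
    | zero => omega
    | succ n ih =>
      rcases Nat.eq_zero_or_pos n with rfl | hn
      · have h0 : w 0 = 0 := hw.1
        have h1 : w 1 ≠ 0 := by
          intro hc
          exact absurd (w.injective (hc.trans h0.symm)) (by omega)
        simpa using Nat.one_le_iff_ne_zero.mpr h1
      · have := hmono n hn; omega
  have hSne : ∃ m, w m ≠ m := by
    by_contra h'
    push_neg at h'
    exact hne (Equiv.ext fun x => h' x)
  obtain ⟨m0, hm0⟩ := hSne
  obtain ⟨m, hmS, hmax⟩ := Finset.exists_max_image hw.2.toFinset w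
    ⟨m0, by simpa [Set.Finite.mem_toFinset] using hm0⟩
  rw [Set.Finite.mem_toFinset] at hmS
  have hmlt : m < w m := lt_of_le_of_ne (hge m) (Ne.symm hmS)
  set v := w m with hv
  have hvS : w v = v := by
    by_contra hc
    have : w v ≤ w m := hmax v (by rwa [Set.Finite.mem_toFinset])
    have : v < w v := lt_of_le_of_ne (hge v) (Ne.symm hc)
    omega
  exact absurd (w.injective hvS) (by omega)

lemma chain (w : Equiv.Perm ℕ) (d : ℕ) (hstep : ∀ i, 0 < i → i < d → w i < w (i + 1)) :
    ∀ i j, 0 < i → i < j → j ≤ d → w i < w j := by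
  intro i j hi hij hjd
  induction j with
  | zero => omega
  | succ n ih =>
    rcases Nat.lt_or_ge i n with h | h
    · exact lt_trans (ih h (by omega)) (hstep n (by omega) (by omega))
    · have hin : i = n := by omega
      rw [hin]
      exact hstep n (by omega) (by omega)


end Stmt3Aux

theorem stmt3 (δ : Equiv.Perm ℕ) (hδ : FinPerm δ) (hne : δ ≠ 1)
    (l : ℕ) (hl : 0 < l) (hld : l ≤ d1 δ)
    (π : Equiv.Perm ℕ) (a b : ℕ) (ha : 0 < a) (hal : a < l) (hlb : l < b)
    (hπ : π = δ * Equiv.swap a b) (hlen : len π = len δ + 1) :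
    d1 π = d1 δ := by
  classical
  open Stmt3Aux in
  have hinvδ : (Stmt3Aux.Inv δ).Finite := Stmt3Aux.inv_finite δ hδ.2
  have hsuppπ : {i : ℕ | π i ≠ i}.Finite := by
    apply Set.Finite.subset (hδ.2.union ((Set.finite_singleton b).insert a))
    intro x hx
    by_cases hxa : x = a
    · exact Or.inr (by simp [hxa])
    by_cases hxb : x = b
    · exact Or.inr (by simp [hxb])
    · left
      simp only [Set.mem_setOf_eq] at hx ⊢
      have e : π x = δ x := by
        rw [hπ]
        simp [Equiv.Perm.mul_apply, Equiv.swap_apply_of_ne_of_ne hxa hxb]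
      rwa [e] at hx
  have hinvπ : (Stmt3Aux.Inv π).Finite := Stmt3Aux.inv_finite π hsuppπ
  have hab : a < b := by omega
  have hne_ab : δ a ≠ δ b := δ.injective.ne (by omega)
  have hπa : π a = δ b := by rw [hπ]; simp
  have hπb : π b = δ a := by rw [hπ]; simp
  have hπo : ∀ x, x ≠ a → x ≠ b → π x = δ x := by
    intro x h1 h2
    rw [hπ]
    simp [Equiv.Perm.mul_apply, Equiv.swap_apply_of_ne_of_ne h1 h2]
  have hδab : δ a < δ b := by
    rcases lt_or_gt_of_ne hne_ab with h | h
    · exact h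
    · exfalso
      have hδeq : δ = π * Equiv.swap a b := by
        rw [hπ, mul_assoc, Equiv.swap_mul_self, mul_one]
      have hπab : π a < π b := by rw [hπa, hπb]; omega
      have hk := Stmt3Aux.key1 π a b hab hπab hinvπ (by rw [← hδeq]; exact hinvδ)
      rw [← hδeq] at hk
      omega
  have noc : ∀ c, a < c → c < b → ¬ (δ a < δ c ∧ δ c < δ b) := by
    rintro c h1 h2 ⟨h3, h4⟩
    have hk := Stmt3Aux.key2 δ a b c hab hδab h1 h2 h3 h4 hinvδ (by rw [← hπ]; exact hinvπ)
    rw [← hπ] at hk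
    omega
  have hdne := Stmt3Aux.descents_nonempty δ hδ hne
  have hd : d1 δ ∈ descents δ := Nat.sInf_mem hdne
  set d := d1 δ with hdd
  obtain ⟨hd0, hddesc⟩ := hd
  have hnolow : ∀ i, 0 < i → i < d → δ i < δ (i + 1) := by
    intro i h1 h2
    have hni : i ∉ descents δ := Nat.notMem_of_lt_sInf h2
    have h3 : ¬ δ (i + 1) < δ i := fun hc => hni ⟨h1, hc⟩
    have h4 : δ i ≠ δ (i + 1) := δ.injective.ne (by omega)
    omega
  have hchain := Stmt3Aux.chain δ d hnolow
  have hbd : d < b := by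
    by_contra hc
    push_neg at hc
    exact noc (a + 1) (by omega) (by omega)
      ⟨hchain a (a + 1) ha (by omega) (by omega),
       hchain (a + 1) b (by omega) (by omega) hc⟩
  have hald : a < d := by omega
  have hdmem : d ∈ descents π := by
    refine ⟨hd0, ?_⟩
    by_cases hdb : d + 1 = b
    · have e1 : π (d + 1) = δ a := by rw [hdb]; exact hπb
      have e2 : π d = δ d := hπo d (by omega) (by omega)
      rw [e1, e2]
      exact hchain a d ha hald le_rfl
    · have e1 : π (d + 1) = δ (d + 1) := hπo (d + 1) (by omega) (by omega)
      have e2 : π d = δ d := hπo d (by omega) (by omega)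
      rw [e1, e2]
      exact hddesc
  have hnolowπ : ∀ i, i < d → i ∉ descents π := by
    rintro i hid ⟨hi0, hdesc⟩
    by_cases hia : i = a
    · have e1 : π i = δ b := by rw [hia]; exact hπa
      have e2 : π (i + 1) = δ (i + 1) := hπo (i + 1) (by omega) (by omega)
      rw [e1, e2] at hdesc
      have h3 : δ a < δ (i + 1) := hchain a (i + 1) ha (by omega) (by omega)
      exact noc (i + 1) (by omega) (by omega) ⟨h3, hdesc⟩
    · by_cases hi1a : i + 1 = a
      · have e1 : π i = δ i := hπo i (by omega) (by omega)
        have e2 : π (i + 1) = δ b := by rw [hi1a]; exact hπa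
        rw [e1, e2] at hdesc
        have h3 : δ i < δ a := hchain i a hi0 (by omega) (by omega)
        omega
      · have e1 : π i = δ i := hπo i hia (by omega)
        have e2 : π (i + 1) = δ (i + 1) := hπo (i + 1) hi1a (by omega)
        rw [e1, e2] at hdesc
        have := hnolow i hi0 hid
        omega
  have hπne : (descents π).Nonempty := ⟨d, hdmem⟩
  apply le_antisymm
  · exact Nat.sInf_le hdmem
  · by_contra hc
    push_neg at hc
    exact hnolowπ _ hc (Nat.sInf_mem hπne)
end

section
/- For every permutation w ≠ id, the set of positions i such that w⁻¹(w(i)+1) < i is nonempty and finite. Moreover, letting i(w) denote its maximum and setting v = t_{w(i(w)), w(i(w))+1} ∘ w (the permutation obtained from w by swapping the values w(i(w)) and w(i(w))+1), we have ℓ(v) = ℓ(w) − 1 and v ⋖_{i(w)−1} w; in particular i(w) ≥ 2. -/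
/-- `i(w)`: the largest position `i` with `w⁻¹(w(i)+1) < i`. -/
noncomputable def iw (w : Equiv.Perm ℕ) : ℕ :=
  sSup {i : ℕ | 0 < i ∧ w⁻¹ (w i + 1) < i}

/-- `φ(w) = t_{w(i(w)), w(i(w))+1} ∘ w`, swapping the values `w(i(w))` and `w(i(w))+1`. -/
noncomputable def phi (w : Equiv.Perm ℕ) : Equiv.Perm ℕ :=
  Equiv.swap (w (iw w)) (w (iw w) + 1) * w

/-- `κ(w) = i(w) - 1`. -/
noncomputable def kappa (w : Equiv.Perm ℕ) : ℕ := iw w - 1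

/-!
If no position `i > 0` has `w⁻¹ (w i + 1) < i`, then `w⁻¹` is strictly increasing, hence the
identity. Swapping two adjacent values `c, c + 1` of `w` toggles exactly one pair in the inversion
set, namely the pair of positions holding `c` and `c + 1`. For `c = w (i(w))` this pair
`(w⁻¹ (c + 1), i(w))` is an inversion of `w`, so the swap removes it: the length drops by one, and
`w` is obtained back by the transposition of the positions `w⁻¹ (c + 1) < i(w)`.
-/

theorem Equiv.Perm.eq_one_of_strictMono {α : Type*} [LinearOrder α] [WellFoundedLT α]
    (f : Equiv.Perm α) (hf : StrictMono f) : f = 1 := by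
  ext a
  simpa using congrArg (· a)
    (Subsingleton.elim (StrictMono.orderIsoOfSurjective f hf f.surjective) (OrderIso.refl α))

theorem Equiv.swap_succ_apply_lt_swap_succ_apply_iff {c x y : ℕ} :
    Equiv.swap c (c + 1) x < Equiv.swap c (c + 1) y ↔
      (x < y ∧ ¬(x = c ∧ y = c + 1)) ∨ (x = c + 1 ∧ y = c) := by
  simp only [Equiv.swap_apply_def]
  split_ifs <;> omega

theorem inversions_swap_mul {w : Equiv.Perm ℕ} {c i j : ℕ} (hi : w i = c)
    (hj : w j = c + 1) (hji : j < i) :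
    inversions (Equiv.swap c (c + 1) * w) = inversions w \ {(j, i)} := by
  ext ⟨p, q⟩
  simp only [inversions, Set.mem_sdiff, Set.mem_ofPred_eq, Set.mem_singleton_iff, Prod.mk.injEq,
    Equiv.Perm.mul_apply, Equiv.swap_succ_apply_lt_swap_succ_apply_iff]
  constructor
  · rintro ⟨hpq, ⟨hlt, hne⟩ | ⟨hq, hp⟩⟩
    · exact ⟨⟨hpq, hlt⟩, by rintro ⟨rfl, rfl⟩; exact hne ⟨hi, hj⟩⟩
    · have := w.injective (hp.trans hi.symm)
      have := w.injective (hq.trans hj.symm)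
      omega
  · rintro ⟨⟨hpq, hlt⟩, hne⟩
    refine ⟨hpq, .inl ⟨hlt, ?_⟩⟩
    rintro ⟨hq, hp⟩
    exact hne ⟨w.injective (hp.trans hj.symm), w.injective (hq.trans hi.symm)⟩

theorem exists_forall_lt_apply_eq {w : Equiv.Perm ℕ} (hw : {i : ℕ | w i ≠ i}.Finite) :
    ∃ b, ∀ j, b < j → w j = j := by
  obtain ⟨b, hb⟩ := hw.bddAbove
  exact ⟨b, fun j hj => by_contra fun h => absurd (hb h) (by omega)⟩

theorem apply_le_of_forall_lt_apply_eq {w : Equiv.Perm ℕ} {b : ℕ}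
    (hb : ∀ j, b < j → w j = j) {p : ℕ} (hp : p ≤ b) : w p ≤ b := by
  by_contra h
  have := w.injective (hb (w p) (by omega))
  omega

theorem inversions_subset_Iic_prod_Iic {w : Equiv.Perm ℕ} {b : ℕ}
    (hb : ∀ j, b < j → w j = j) : inversions w ⊆ Set.Iic b ×ˢ Set.Iic b := by
  rintro ⟨p, q⟩ ⟨hpq, hinv⟩
  simp only at hpq hinv
  by_cases hq : q ≤ b
  · exact ⟨show p ≤ b by omega, hq⟩
  · have := hb q (by omega)
    by_cases hp : p ≤ b
    · have := apply_le_of_forall_lt_apply_eq hb hp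
      omega
    · have := hb p (by omega)
      omega

theorem inversions_finite {w : Equiv.Perm ℕ} (hw : {i : ℕ | w i ≠ i}.Finite) :
    (inversions w).Finite := by
  obtain ⟨b, hb⟩ := exists_forall_lt_apply_eq hw
  exact ((Set.finite_Iic b).prod (Set.finite_Iic b)).subset (inversions_subset_Iic_prod_Iic hb)

theorem len_swap_mul_add_one {w : Equiv.Perm ℕ} (hw : (inversions w).Finite) {c i j : ℕ}
    (hi : w i = c) (hj : w j = c + 1) (hji : j < i) :
    len (Equiv.swap c (c + 1) * w) + 1 = len w := by
  have hmem : (j, i) ∈ inversions w := ⟨hji, show w i < w j by omega⟩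
  change (inversions _).ncard + 1 = (inversions w).ncard
  rw [inversions_swap_mul hi hj hji, Set.ncard_sdiff_singleton_add_one hmem hw]

theorem swap_mul_mul_swap {w : Equiv.Perm ℕ} {c i j : ℕ} (hi : w i = c) (hj : w j = c + 1) :
    Equiv.swap c (c + 1) * w * Equiv.swap j i = w := by
  rw [mul_assoc, Equiv.mul_swap_eq_swap_mul, hi, hj, Equiv.swap_comm, Equiv.swap_mul_self_mul]

def backSteps (w : Equiv.Perm ℕ) : Set ℕ :=
  {i | 0 < i ∧ w⁻¹ (w i + 1) < i}

theorem backSteps_nonempty {w : Equiv.Perm ℕ} (hw : w ≠ 1) : (backSteps w).Nonempty := by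
  by_contra hempty
  refine hw (inv_eq_one.mp (Equiv.Perm.eq_one_of_strictMono _ (strictMono_nat_of_lt_succ ?_)))
  intro c
  have hnot : ¬w⁻¹ (c + 1) < w⁻¹ c := fun hlt =>
    hempty ⟨w⁻¹ c, by omega, by simpa using hlt⟩
  have hne : w⁻¹ (c + 1) ≠ w⁻¹ c := fun h => by simpa using w⁻¹.injective h
  omega

theorem backSteps_subset_Iic {w : Equiv.Perm ℕ} {b : ℕ} (hb : ∀ j, b < j → w j = j) :
    backSteps w ⊆ Set.Iic b := by
  rintro i ⟨-, hlt⟩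
  by_contra hib
  simp only [Set.mem_Iic, not_le] at hib
  have : w⁻¹ (i + 1) = i + 1 := by
    rw [Equiv.Perm.inv_eq_iff_eq, hb (i + 1) (by omega)]
  rw [hb i hib, this] at hlt
  omega

theorem backSteps_finite {w : Equiv.Perm ℕ} (hw : {i : ℕ | w i ≠ i}.Finite) :
    (backSteps w).Finite := by
  obtain ⟨b, hb⟩ := exists_forall_lt_apply_eq hw
  exact (Set.finite_Iic b).subset (backSteps_subset_Iic hb)

/-- The construction step of the up-chain is well defined and gives a
`κ(w)`-Bruhat cocover of `w`. -/
theorem stmt7 (w : Equiv.Perm ℕ) (hw : FinPerm w) (hne : w ≠ 1) :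
    {i : ℕ | 0 < i ∧ w⁻¹ (w i + 1) < i}.Nonempty ∧
    {i : ℕ | 0 < i ∧ w⁻¹ (w i + 1) < i}.Finite ∧
    len (phi w) + 1 = len w ∧ kCover (kappa w) (phi w) w ∧ 2 ≤ iw w := by
  obtain ⟨hw0, hsupp⟩ := hw
  have hS : (backSteps w).Nonempty := backSteps_nonempty hne
  have hfin : (backSteps w).Finite := backSteps_finite hsupp
  obtain ⟨hi0, hji⟩ : iw w ∈ backSteps w := Nat.sSup_mem hS hfin.bddAbove
  set i := iw w
  set j := w⁻¹ (w i + 1)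
  have hj : w j = w i + 1 := w.apply_symm_apply _
  have hj0 : j ≠ 0 := fun h => by simp [h, hw0] at hj
  have hlen : len (phi w) + 1 = len w := len_swap_mul_add_one (inversions_finite hsupp) rfl hj hji
  refine ⟨hS, hfin, hlen, ⟨j, i, by omega, by unfold kappa; omega, by unfold kappa; omega,
    (swap_mul_mul_swap rfl hj).symm, hlen.symm⟩, by omega⟩
end

section
/- Let w ≠ id be a permutation and let i be the smallest position with w(i) ≠ i. Then w(i) > i, the set of positions j > i such that ℓ(w t_{ij}) = ℓ(w) − 1 is nonempty, and for its smallest element j we have w t_{ij} ⋖_i w. -/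
def invSet (w : Equiv.Perm ℕ) : Set (ℕ × ℕ) := {p | p.1 < p.2 ∧ w p.2 < w p.1}

lemma len_eq (w : Equiv.Perm ℕ) : len w = (invSet w).ncard := rfl

lemma moved_apply {w : Equiv.Perm ℕ} {x : ℕ} (h : w x ≠ x) : w (w x) ≠ w x :=
  fun h' => h (w.injective h')

lemma invSet_finite_s9 (w : Equiv.Perm ℕ) (hf : {i : ℕ | w i ≠ i}.Finite) :
    (invSet w).Finite := by
  obtain ⟨N, hN⟩ := hf.bddAbove
  apply Set.Finite.subset ((Set.finite_Iic N).prod (Set.finite_Iic N))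
  rintro ⟨x, y⟩ ⟨hxy, hv⟩
  replace hxy : x < y := hxy
  replace hv : w y < w x := hv
  simp only [Set.mem_prod, Set.mem_Iic]
  by_cases hy : w y = y
  · by_cases hx : w x = x
    · omega
    · have h1 : x ≤ N := hN hx
      have h2 : w x ≤ N := hN (moved_apply hx)
      omega
  · have h2 : y ≤ N := hN hy
    omega

/-- Middle pairs for the swap `(i b)`. -/
def Mset (i b : ℕ) : Set (ℕ × ℕ) :=
  {p | p.1 < p.2 ∧ i ≤ p.1 ∧ p.2 ≤ b ∧ (p.1 = i ∨ p.2 = b)}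

lemma aux_off (v : Equiv.Perm ℕ) (i b : ℕ) (hib : i < b) (p : ℕ × ℕ)
    (hp : p ∈ invSet (v * Equiv.swap i b) \ Mset i b) :
    (Equiv.swap i b p.1, Equiv.swap i b p.2) ∈ invSet v \ Mset i b := by
  obtain ⟨⟨hxy, hv⟩, hm⟩ := hp
  obtain ⟨x, y⟩ := p
  replace hxy : x < y := hxy
  replace hv : v (Equiv.swap i b y) < v (Equiv.swap i b x) := hv
  replace hm : ¬(x < y ∧ i ≤ x ∧ y ≤ b ∧ (x = i ∨ y = b)) := hm
  have hσ : ∀ z : ℕ, z ≠ i → z ≠ b → Equiv.swap i b z = z := fun z h1 h2 =>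
    Equiv.swap_apply_of_ne_of_ne h1 h2
  simp only [invSet, Mset, Set.mem_diff, Set.mem_setOf_eq]
  rcases eq_or_ne x i with rfl | hxi
  · have hyb : b < y := by omega
    have e1 : Equiv.swap x b x = b := Equiv.swap_apply_left x b
    have e2 : Equiv.swap x b y = y := hσ y (by omega) (by omega)
    rw [e1, e2] at hv ⊢
    exact ⟨⟨by omega, hv⟩, by omega⟩
  rcases eq_or_ne x b with rfl | hxb
  · have e1 : Equiv.swap i x x = i := Equiv.swap_apply_right i x
    have e2 : Equiv.swap i x y = y := hσ y (by omega) (by omega)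
    rw [e1, e2] at hv ⊢
    exact ⟨⟨by omega, hv⟩, by omega⟩
  rcases eq_or_ne y i with rfl | hyi
  · have e1 : Equiv.swap y b x = x := hσ x hxi hxb
    have e2 : Equiv.swap y b y = b := Equiv.swap_apply_left y b
    rw [e1, e2] at hv ⊢
    exact ⟨⟨by omega, hv⟩, by omega⟩
  rcases eq_or_ne y b with rfl | hyb
  · have hxlt : x < i := by omega
    have e1 : Equiv.swap i y x = x := hσ x hxi hxb
    have e2 : Equiv.swap i y y = i := Equiv.swap_apply_right i y
    rw [e1, e2] at hv ⊢
    exact ⟨⟨by omega, hv⟩, by omega⟩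
  · have e1 : Equiv.swap i b x = x := hσ x hxi hxb
    have e2 : Equiv.swap i b y = y := hσ y hyi hyb
    rw [e1, e2] at hv ⊢
    exact ⟨⟨by omega, hv⟩, by omega⟩


lemma len_swap (w : Equiv.Perm ℕ) (hf : {i : ℕ | w i ≠ i}.Finite) (i b : ℕ)
    (hib : i < b) (hwb : w b < w i) (H : ∀ k, i < k → k < b → w i < w k) :
    len (w * Equiv.swap i b) + 1 = len w := by
  set σ := Equiv.swap i b with hσdef
  set u := w * σ with hu
  have huσ : u * σ = w := by
    rw [hu, mul_assoc, hσdef, Equiv.swap_mul_self, mul_one]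
  have happ : ∀ z, u z = w (σ z) := fun z => rfl
  have hσi : σ i = b := Equiv.swap_apply_left i b
  have hσb : σ b = i := Equiv.swap_apply_right i b
  have hσo : ∀ z : ℕ, z ≠ i → z ≠ b → σ z = z := fun z h1 h2 =>
    Equiv.swap_apply_of_ne_of_ne h1 h2
  have hfu : {k : ℕ | u k ≠ k}.Finite := by
    apply (hf.union ((Set.finite_singleton b).insert i)).subset
    intro k hk
    by_cases h1 : k = i
    · exact Or.inr (by simp [h1])
    by_cases h2 : k = b
    · exact Or.inr (by simp [h2])
    · left
      simpa [happ, hσo k h1 h2] using hk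
  have hSw := invSet_finite_s9 w hf
  have hSu := invSet_finite_s9 u hfu
  have hinj : Function.Injective (fun p : ℕ × ℕ => (σ p.1, σ p.2)) := by
    intro p q h
    rw [Prod.ext_iff] at h ⊢
    exact ⟨σ.injective h.1, σ.injective h.2⟩
  have himg : (fun p : ℕ × ℕ => (σ p.1, σ p.2)) '' (invSet u \ Mset i b)
      = invSet w \ Mset i b := by
    apply Set.Subset.antisymm
    · rintro q ⟨p, hp, rfl⟩
      exact aux_off w i b hib p hp
    · intro q hq
      have hq' : q ∈ invSet (u * σ) \ Mset i b := by rwa [huσ]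
      refine ⟨(σ q.1, σ q.2), aux_off u i b hib q hq', ?_⟩
      simp [hσdef, Equiv.swap_apply_self]
  have hdiff : (invSet u \ Mset i b).ncard = (invSet w \ Mset i b).ncard := by
    rw [← himg, Set.ncard_image_of_injective _ hinj]
  have mem_inv : ∀ (v : Equiv.Perm ℕ) (x y : ℕ),
      (x, y) ∈ invSet v ↔ x < y ∧ v y < v x := fun _ _ _ => Iff.rfl
  have mem_M : ∀ (x y : ℕ),
      (x, y) ∈ Mset i b ↔ x < y ∧ i ≤ x ∧ y ≤ b ∧ (x = i ∨ y = b) :=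
    fun _ _ => Iff.rfl
  have hPu : invSet u ∩ Mset i b = (fun x => (x, b)) '' Set.Ioo i b := by
    ext ⟨x, y⟩
    simp only [Set.mem_inter_iff, mem_inv, mem_M, Set.mem_image, Set.mem_Ioo,
      Prod.mk.injEq, happ]
    constructor
    · rintro ⟨⟨hxy, hv⟩, hix, hyb, hcase⟩
      rcases eq_or_ne x i with rfl | hxi
      · exfalso
        rcases eq_or_ne y b with rfl | hyb'
        · rw [hσi, hσb] at hv; omega
        · rw [hσi, hσo y (by omega) hyb'] at hv
          have := H y (by omega) (by omega); omega
      · exact ⟨x, by omega, rfl, by omega⟩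
    · rintro ⟨x', ⟨h1, h2⟩, rfl, rfl⟩
      have hv : w (σ b) < w (σ x') := by
        rw [hσb, hσo x' (by omega) (by omega)]
        exact H x' h1 h2
      exact ⟨⟨h2, hv⟩, by omega, by omega, by omega, by omega⟩
  have hPw : invSet w ∩ Mset i b
      = insert (i, b) ((fun x => (x, b)) '' Set.Ioo i b) := by
    ext ⟨x, y⟩
    simp only [Set.mem_inter_iff, mem_inv, mem_M, Set.mem_insert_iff, Set.mem_image,
      Set.mem_Ioo, Prod.mk.injEq]
    constructor
    · rintro ⟨⟨hxy, hv⟩, hix, hyb, hcase⟩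
      rcases eq_or_ne x i with rfl | hxi
      · rcases eq_or_ne y b with rfl | hyb'
        · exact Or.inl ⟨rfl, rfl⟩
        · exfalso; have := H y (by omega) (by omega); omega
      · exact Or.inr ⟨x, by omega, rfl, by omega⟩
    · rintro (⟨rfl, rfl⟩ | ⟨x', ⟨h1, h2⟩, rfl, rfl⟩)
      · exact ⟨⟨by omega, hwb⟩, by omega, by omega, by omega, by omega⟩
      · have hv : w b < w x' := lt_trans hwb (H x' h1 h2)
        exact ⟨⟨h2, hv⟩, by omega, by omega, by omega, by omega⟩
  have hPfin : ((fun x => (x, b)) '' Set.Ioo i b).Finite := (Set.finite_Ioo i b).image _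
  have hnm : (i, b) ∉ (fun x => (x, b)) '' Set.Ioo i b := by
    rintro ⟨x', hx', h3⟩
    replace hx' : i < x' ∧ x' < b := hx'
    have h4 : x' = i ∧ b = b := by
      have := Prod.ext_iff.mp h3; exact ⟨this.1, this.2⟩
    omega
  have hcard : (invSet w ∩ Mset i b).ncard = (invSet u ∩ Mset i b).ncard + 1 := by
    rw [hPu, hPw, Set.ncard_insert_of_notMem hnm hPfin]
  have e1 := Set.ncard_inter_add_ncard_diff_eq_ncard (invSet u) (Mset i b) hSu
  have e2 := Set.ncard_inter_add_ncard_diff_eq_ncard (invSet w) (Mset i b) hSw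
  rw [len_eq, len_eq]
  omega

/-- The construction step of the down-chain is well defined and gives an
`i`-Bruhat cocover of `w`, where `i = γ(w)` is the first non-fixed position. -/
theorem stmt9 (w : Equiv.Perm ℕ) (hw : FinPerm w) (hne : w ≠ 1) :
    let i := sInf {i : ℕ | w i ≠ i}
    i < w i ∧
    {j : ℕ | i < j ∧ len (w * Equiv.swap i j) + 1 = len w}.Nonempty ∧
    kCover i (w * Equiv.swap i (sInf {j : ℕ | i < j ∧ len (w * Equiv.swap i j) + 1 = len w})) w := by
  intro i
  obtain ⟨hw0, hwfin⟩ := hw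
  have hS : {i : ℕ | w i ≠ i}.Nonempty := by
    by_contra h
    rw [Set.not_nonempty_iff_eq_empty] at h
    apply hne
    ext x
    by_contra hx
    exact absurd (Set.eq_empty_iff_forall_notMem.mp h x) (by simpa using hx)
  have hiS : w i ≠ i := Nat.sInf_mem hS
  have hmin : ∀ k, k < i → w k = k := by
    intro k hk
    by_contra h
    have h2 : i ≤ k := Nat.sInf_le h
    omega
  have hi0 : 0 < i := by
    rcases Nat.eq_zero_or_pos i with h | h
    · exfalso; apply hiS; rw [h, hw0]
    · exact h
  have hiwi : i < w i := by
    rcases lt_trichotomy (w i) i with h | h | h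
    · have h2 : w (w i) = w i := hmin (w i) h
      exact absurd (w.injective h2) hiS
    · exact absurd h hiS
    · exact h
  have hbne : {k : ℕ | i < k ∧ w k < w i}.Nonempty := by
    refine ⟨w.symm i, ?_, ?_⟩
    · show i < w.symm i
      rcases lt_trichotomy (w.symm i) i with h | h | h
      · exfalso
        have h2 : w (w.symm i) = w.symm i := hmin _ h
        rw [Equiv.apply_symm_apply] at h2
        omega
      · exfalso; apply hiS; rw [← h, Equiv.apply_symm_apply]; exact h.symm
      · exact h
    · show w (w.symm i) < w i
      rw [Equiv.apply_symm_apply]; exact hiwi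
  have hbmem := Nat.sInf_mem hbne
  set b := sInf {k : ℕ | i < k ∧ w k < w i} with hbdef
  have Hb : ∀ k, i < k → k < b → w i < w k := by
    intro k h1 h2
    have h3 : b ≤ k → False := fun hc => by omega
    have h3' : ¬(i < k ∧ w k < w i) := fun hc => h3 (Nat.sInf_le hc)
    have h4 : w k ≠ w i := fun h => by have := w.injective h; omega
    omega
  have hlen := len_swap w hwfin i b hbmem.1 hbmem.2 Hb
  have hTne : {j : ℕ | i < j ∧ len (w * Equiv.swap i j) + 1 = len w}.Nonempty :=
    ⟨b, hbmem.1, hlen⟩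
  have hjmem := Nat.sInf_mem hTne
  refine ⟨hiwi, hTne, i, sInf {j : ℕ | i < j ∧ len (w * Equiv.swap i j) + 1 = len w},
    hi0, le_rfl, hjmem.1, ?_, hjmem.2.symm⟩
  rw [mul_assoc, Equiv.swap_mul_self, mul_one]
end

section
/- Let δ ≠ id be a permutation and suppose π = δ t_{ab} with ℓ(π) = ℓ(δ) + 1 and b ≤ d₂(δ). Then d₂(π) ≤ d₂(δ); moreover, if b < d₂(δ), then d₂(π) = d₂(δ). -/
lemma descents_nonempty_s11 (δ : Equiv.Perm ℕ) (h0 : δ 0 = 0) (hne : δ ≠ 1) :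
    {i : ℕ | 0 < i ∧ δ (i + 1) < δ i}.Nonempty := by
  by_contra h
  rw [Set.not_nonempty_iff_eq_empty] at h
  have hmono : StrictMono δ := by
    apply strictMono_nat_of_lt_succ
    intro n
    rcases Nat.eq_zero_or_pos n with hn | hn
    · subst hn
      rw [h0]
      rcases Nat.eq_zero_or_pos (δ 1) with h1 | h1
      · exact absurd (δ.injective (h1.trans h0.symm)) one_ne_zero
      · exact h1
    · have : n ∉ {i : ℕ | 0 < i ∧ δ (i + 1) < δ i} := h ▸ Set.notMem_empty n
      simp only [Set.mem_setOf_eq, not_and, not_lt] at this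
      exact lt_of_le_of_ne (this hn) fun he => by have := δ.injective he; omega
  apply hne
  ext i
  simp only [Equiv.Perm.one_apply]
  induction i using Nat.strong_induction_on with
  | _ i ih =>
    have h1 : i ≤ δ i := hmono.le_apply
    rcases lt_or_eq_of_le h1 with h2 | h2
    · exfalso
      obtain ⟨j, hj⟩ := δ.surjective i
      rcases lt_trichotomy j i with hji | hji | hji
      · exact absurd ((ih j hji).symm.trans hj) (Nat.ne_of_lt hji)
      · subst hji
        exact absurd hj (Nat.ne_of_gt h2)
      · have h4 := hmono hji
        rw [hj] at h4
        exact absurd (h4.trans h2) (lt_irrefl _)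
    · exact h2.symm

theorem stmt11 (δ : Equiv.Perm ℕ) (hδ : FinPerm δ) (hne : δ ≠ 1)
    (π : Equiv.Perm ℕ) (a b : ℕ) (ha : 0 < a) (hab : a < b) (hb : b ≤ d2 δ)
    (hπ : π = δ * Equiv.swap a b) (hlen : len π = len δ + 1) :
    d2 π ≤ d2 δ ∧ (b < d2 δ → d2 π = d2 δ) := by
  -- π agrees with δ away from a and b
  have hagree : ∀ i : ℕ, i ≠ a → i ≠ b → π i = δ i := by
    intro i hia hib
    rw [hπ, Equiv.Perm.mul_apply, Equiv.swap_apply_of_ne_of_ne hia hib]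
  -- descents δ is finite, hence bounded above
  have hfinδ : (descents δ).Finite := by
    apply Set.Finite.subset (hδ.2.union (hδ.2.preimage
      (Set.injOn_of_injective (add_left_injective 1))))
    intro i hi
    obtain ⟨hi0, hid⟩ := hi
    by_contra hcon
    simp only [Set.mem_union, Set.mem_preimage, Set.mem_setOf_eq, not_or, not_not] at hcon
    omega
  have hbddδ : BddAbove (descents δ) := hfinδ.bddAbove
  have hneδ : (descents δ).Nonempty := descents_nonempty_s11 δ hδ.1 hne
  have hmem : d2 δ ∈ descents δ := Nat.sSup_mem hneδ hbddδ
  -- every descent of π is ≤ d2 δ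
  have hub : ∀ i ∈ descents π, i ≤ d2 δ := by
    intro i hi
    obtain ⟨hi0, hid⟩ := hi
    by_cases hib : i ≤ b
    · exact hib.trans hb
    · push_neg at hib
      have e1 : π i = δ i := hagree i (by omega) (by omega)
      have e2 : π (i + 1) = δ (i + 1) := hagree (i + 1) (by omega) (by omega)
      rw [e1, e2] at hid
      exact le_csSup hbddδ ⟨hi0, hid⟩
  constructor
  · exact csSup_le' hub
  · intro hbd
    refine le_antisymm (csSup_le' hub) ?_
    have hmemπ : d2 δ ∈ descents π := by
      obtain ⟨h0, hd⟩ := hmem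
      refine ⟨h0, ?_⟩
      rw [hagree _ (by omega) (by omega), hagree _ (by omega) (by omega)]
      exact hd
    exact le_csSup ⟨d2 δ, hub⟩ hmemπ
end
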